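/- Let X = X_1 × ⋯ × X_n be a finite product space with each X_i a finite nonempty set, θ : X → ℝ, and Z = Σ_{x∈X} exp(θ(x)). Let A be a finite nonempty family of nonempty subsets α ⊆ {1,…,n}, and for each α ∈ A let {γ_α(x_α)} be independent zero-mean Gumbel random variables, one for each α and each assignment x_α ∈ Π_{i∈α} X_i (independent across all α and x_α). Then log Z ≥ E_γ[ max_{x∈X} { θ(x) + (1/|A|) Σ_{α∈A} γ_α(x_α) } ]. -/

import Mathlib

/-!
For each `α ∈ A` let `c_α v = log ∑_{x_α = v} exp (θ x)`, so that `θ x ≤ c_α x_α` and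
`∑_v exp (c_α v) = Z`. The perturbed objective at `x` is then at most the average over `α` of
`M_α = max_v (c_α v + γ_α v)`, and by the Gumbel-max trick `M_α` is Gumbel with mean `log Z`.
A Gumbel variable of mean `m` is `m - γ - log E` with `E` standard exponential, and its mean is
computed from `∫₀^∞ log t e^{-t} dt = Γ'(1) = -γ`.
-/

open MeasureTheory Real ProbabilityTheory Set

theorem integrableOn_log_mul_exp_neg : IntegrableOn (fun t => log t * exp (-t)) (Ioi 0) := by
  -- differentiating `Γ`, the Mellin transform of `exp (-t)`, under the integral sign at `s = 1`
  have h := (mellin_hasDerivAt_of_isBigO_rpow (E := ℂ) (f := fun t => (exp (-t) : ℂ))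
    (a := 2) (b := 0) (s := 1) ?_ ?_ (by norm_num) ?_ (by norm_num)).1
  · have h' : IntegrableOn (fun t : ℝ => ((log t * exp (-t) : ℝ) : ℂ)) (Ioi 0) :=
      IntegrableOn.congr_fun h (fun t _ => by simp) measurableSet_Ioi
    exact h'.re
  · exact (Complex.continuous_ofReal.comp (continuous_exp.comp continuous_neg)).continuousOn
      |>.locallyIntegrableOn measurableSet_Ioi
  · rw [← Asymptotics.isBigO_norm_left]
    simp_rw [Complex.norm_real, Asymptotics.isBigO_norm_left]
    simpa only [neg_one_mul] using (isLittleO_exp_neg_mul_rpow_atTop zero_lt_one _).isBigO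
  · simp_rw [neg_zero, rpow_zero]
    refine Asymptotics.isBigO_const_of_tendsto (y := (1 : ℂ)) ?_ one_ne_zero
    have h := (by fun_prop : Continuous fun t : ℝ => (exp (-t) : ℂ)).tendsto 0
    simpa using h.mono_left nhdsWithin_le_nhds

theorem integral_log_mul_exp_neg :
    ∫ t in Ioi 0, log t * exp (-t) = -eulerMascheroniConstant := by
  have hGamma : HasDerivAt Complex.Gamma (∫ t : ℝ in Ioi 0, ((log t * exp (-t) : ℝ) : ℂ)) 1 := by
    have h := Complex.hasDerivAt_GammaIntegral (s := 1) (by norm_num)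
    simp only [sub_self, Complex.cpow_zero, one_mul] at h
    refine (h.congr_of_eventuallyEq ?_).congr_deriv (by push_cast; rfl)
    filter_upwards [(Complex.continuous_re.isOpen_preimage _ isOpen_Ioi).mem_nhds
      (by norm_num : (1 : ℂ) ∈ Complex.re ⁻¹' Ioi 0)] with s hs
    exact Complex.Gamma_eq_integral hs
  have h := hGamma.unique Complex.hasDerivAt_Gamma_one
  rw [integral_complex_ofReal] at h
  exact_mod_cast h

theorem expMeasure_one_eq_withDensity :
    expMeasure 1 = (volume.restrict (Ioi 0)).withDensity fun u => ENNReal.ofReal (exp (-u)) := by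
  rw [Measure.restrict_congr_set Ioi_ae_eq_Ici, ← withDensity_indicator measurableSet_Ici,
    expMeasure, gammaMeasure]
  congr 1
  funext u
  by_cases hu : 0 ≤ u <;> simp [gammaPDF, gammaPDFReal, hu]

theorem ae_expMeasure_one_pos : ∀ᵐ u ∂expMeasure 1, 0 < u := by
  rw [expMeasure_one_eq_withDensity]
  exact (withDensity_absolutelyContinuous _ _).ae_le (ae_restrict_mem measurableSet_Ioi)

theorem expMeasure_one_Ici {a : ℝ} (ha : 0 < a) :
    expMeasure 1 (Ici a) = ENNReal.ofReal (exp (-a)) := by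
  rw [expMeasure_one_eq_withDensity, withDensity_apply _ measurableSet_Ici,
    Measure.restrict_restrict measurableSet_Ici, inter_eq_left.2 (Ici_subset_Ioi.2 ha),
    Measure.restrict_congr_set Ioi_ae_eq_Ici.symm, ← integral_exp_neg_Ioi,
    ofReal_integral_eq_lintegral_ofReal (integrableOn_exp_neg_Ioi a)
      (.of_forall fun u => (exp_pos _).le)]

theorem integrable_expMeasure_one_iff {f : ℝ → ℝ} :
    Integrable f (expMeasure 1) ↔ IntegrableOn (fun u => f u * exp (-u)) (Ioi 0) := by
  rw [expMeasure_one_eq_withDensity, integrable_withDensity_iff (by fun_prop) (by simp)]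
  simp [(exp_pos _).le, IntegrableOn]

theorem integral_expMeasure_one (f : ℝ → ℝ) :
    ∫ u, f u ∂expMeasure 1 = ∫ u in Ioi 0, f u * exp (-u) := by
  rw [expMeasure_one_eq_withDensity,
    integral_withDensity_eq_integral_toReal_smul (by fun_prop) (by simp)]
  simp [(exp_pos _).le, mul_comm]

theorem integrable_log_expMeasure_one : Integrable log (expMeasure 1) :=
  integrable_expMeasure_one_iff.2 integrableOn_log_mul_exp_neg

instance : IsProbabilityMeasure (expMeasure 1) := isProbabilityMeasure_expMeasure one_pos

theorem ProbabilityTheory.HasLaw.integrable_of_integrable_id {Ω : Type*} [MeasurableSpace Ω]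
    {P : Measure Ω} {Y : Ω → ℝ} {μ : Measure ℝ} (hY : HasLaw Y μ P) (hμ : Integrable id μ) :
    Integrable Y P :=
  (integrable_map_measure aestronglyMeasurable_id hY.aemeasurable).1 (hY.map_eq ▸ hμ)

/-- The Gumbel law of scale `1`, parametrised by its mean `m` (its location is `m - γ`). -/
noncomputable def gumbelMeasure (m : ℝ) : Measure ℝ :=
  (expMeasure 1).map fun u => m - eulerMascheroniConstant - log u

instance (m : ℝ) : IsProbabilityMeasure (gumbelMeasure m) :=
  Measure.isProbabilityMeasure_map (by fun_prop)

theorem gumbelMeasure_Iic (m t : ℝ) :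
    gumbelMeasure m (Iic t) =
      ENNReal.ofReal (exp (-exp (-(t - m + eulerMascheroniConstant)))) := by
  have hpreimage : (fun u => m - eulerMascheroniConstant - log u) ⁻¹' Iic t
      =ᵐ[expMeasure 1] Ici (exp (-(t - m + eulerMascheroniConstant))) := by
    refine Filter.eventuallyEq_set.2 ?_
    filter_upwards [ae_expMeasure_one_pos] with u hu
    rw [mem_preimage, mem_Iic, mem_Ici, ← le_log_iff_exp_le hu]
    constructor <;> intro <;> linarith
  rw [gumbelMeasure, Measure.map_apply (by fun_prop) measurableSet_Iic, measure_congr hpreimage,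
    expMeasure_one_Ici (exp_pos _)]

theorem integrable_id_gumbelMeasure (m : ℝ) : Integrable id (gumbelMeasure m) := by
  rw [gumbelMeasure, integrable_map_measure aestronglyMeasurable_id (by fun_prop)]
  exact (integrable_const _).sub integrable_log_expMeasure_one

theorem integral_id_gumbelMeasure (m : ℝ) : ∫ y, y ∂gumbelMeasure m = m := by
  rw [gumbelMeasure, integral_map (f := fun y => y) (by fun_prop) aestronglyMeasurable_id,
    integral_sub (integrable_const _) integrable_log_expMeasure_one, integral_const,
    integral_expMeasure_one, integral_log_mul_exp_neg]
  simp

theorem hasLaw_gumbelMeasure_of_cdf {Ω : Type*} [MeasurableSpace Ω] {P : Measure Ω}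
    [IsProbabilityMeasure P] {Y : Ω → ℝ} (hY : AEMeasurable Y P) {m : ℝ}
    (hcdf : ∀ t, P {ω | Y ω ≤ t} =
      ENNReal.ofReal (exp (-exp (-(t - m + eulerMascheroniConstant))))) :
    HasLaw Y (gumbelMeasure m) P where
  aemeasurable := hY
  map_eq := by
    have := Measure.isProbabilityMeasure_map hY
    refine Measure.ext_of_Iic _ _ fun t => ?_
    rw [Measure.map_apply_of_aemeasurable hY measurableSet_Iic, gumbelMeasure_Iic, ← hcdf]
    rfl

theorem sum_exp_sub_eq_exp_log_sum_exp_sub {V : Type*} [Fintype V] [Nonempty V] (c : V → ℝ)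
    (s : ℝ) : ∑ v, exp (c v - s) = exp (log (∑ v, exp (c v)) - s) := by
  have hpos : 0 < ∑ v, exp (c v) := Finset.sum_pos (fun v _ => exp_pos _) Finset.univ_nonempty
  simp_rw [exp_sub, exp_log hpos, Finset.sum_div]

theorem hasLaw_sup'_add_gumbelMeasure {Ω V : Type*} [MeasurableSpace Ω] {P : Measure Ω}
    [IsProbabilityMeasure P] [Fintype V] [Nonempty V] {g : V → Ω → ℝ} (hind : iIndepFun g P)
    (hg : ∀ v, HasLaw (g v) (gumbelMeasure 0) P) (c : V → ℝ) :
    HasLaw (fun ω => Finset.univ.sup' Finset.univ_nonempty fun v => c v + g v ω)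
      (gumbelMeasure (log (∑ v, exp (c v)))) P := by
  have hmeas : AEMeasurable (Finset.univ.sup' Finset.univ_nonempty fun v ω => c v + g v ω) P :=
    Finset.sup'_induction (p := fun f => AEMeasurable f P) _ _ (fun _ h₁ _ h₂ => h₁.sup h₂)
      fun v _ => (hg v).aemeasurable.const_add (c v)
  refine hasLaw_gumbelMeasure_of_cdf (by convert hmeas with ω; simp) fun t => ?_
  have hset : {ω | (Finset.univ.sup' Finset.univ_nonempty fun v => c v + g v ω) ≤ t}
      = ⋂ v ∈ Finset.univ, g v ⁻¹' Iic (t - c v) := by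
    ext ω
    simp [le_sub_iff_add_le']
  rw [hset, hind.measure_inter_preimage_eq_mul _ fun _ _ => measurableSet_Iic]
  simp_rw [← Measure.map_apply_of_aemeasurable (hg _).aemeasurable measurableSet_Iic,
    (hg _).map_eq, gumbelMeasure_Iic]
  rw [← ENNReal.ofReal_prod_of_nonneg fun _ _ => (exp_pos _).le, ← exp_sum,
    Finset.sum_neg_distrib]
  have hsum := sum_exp_sub_eq_exp_log_sum_exp_sub c (t + eulerMascheroniConstant)
  have hshift : ∀ a, -(t - a + eulerMascheroniConstant) = a - (t + eulerMascheroniConstant) :=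
    fun a => by ring
  simp_rw [sub_zero, hshift, hsum]

open Finset

theorem Finset.restrict_surjective {ι : Type*} {X : ι → Type*} [∀ i, Nonempty (X i)]
    (s : Finset ι) : Function.Surjective (s.restrict : (∀ i, X i) → (i : s) → X i) := by
  classical
  intro v
  refine ⟨fun i => if h : i ∈ s then v ⟨i, h⟩ else Classical.arbitrary _, ?_⟩
  funext i
  simp [Finset.restrict, i.2]

section FiberLogSumExp

variable {S T : Type*} [Fintype S] [DecidableEq T]

/-- For `r = Finset.restrict α` this is the log-partition function of the marginal of `exp ∘ θ` on
the coordinates in `α`. -/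
noncomputable def fiberLogSumExp (r : S → T) (θ : S → ℝ) (t : T) : ℝ :=
  log (∑ x with r x = t, exp (θ x))

theorem le_fiberLogSumExp (r : S → T) (θ : S → ℝ) (x : S) :
    θ x ≤ fiberLogSumExp r θ (r x) := by
  have hx : x ∈ ({y | r y = r x} : Finset S) := by simp
  rw [fiberLogSumExp, le_log_iff_exp_le (sum_pos (fun _ _ => exp_pos _) ⟨x, hx⟩)]
  exact single_le_sum (fun y _ => (exp_pos (θ y)).le) hx

theorem sum_exp_fiberLogSumExp [Fintype T] {r : S → T} (hr : r.Surjective) (θ : S → ℝ) :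
    ∑ t, exp (fiberLogSumExp r θ t) = ∑ x, exp (θ x) := by
  have hfiber (t : T) : 0 < ∑ x with r x = t, exp (θ x) := by
    obtain ⟨x, rfl⟩ := hr t
    exact sum_pos (fun _ _ => exp_pos _) ⟨x, by simp⟩
  simp_rw [fiberLogSumExp, exp_log (hfiber _)]
  exact sum_fiberwise _ _ _

end FiberLogSumExp

theorem ciSup_add_average_le {S K : Type*} [Finite S] [Nonempty S] {s : Finset K}
    (hs : s.Nonempty) (θ : S → ℝ) (f : K → S → ℝ) (B : K → ℝ)
    (hB : ∀ k ∈ s, ∀ x, θ x + f k x ≤ B k) :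
    ⨆ x, (θ x + 1 / (#s : ℝ) * ∑ k ∈ s, f k x) ≤ 1 / (#s : ℝ) * ∑ k ∈ s, B k := by
  have hcard : (0 : ℝ) < #s := by exact_mod_cast hs.card_pos
  refine ciSup_le fun x => ?_
  calc θ x + 1 / (#s : ℝ) * ∑ k ∈ s, f k x = 1 / (#s : ℝ) * ∑ k ∈ s, (θ x + f k x) := by
        rw [sum_add_distrib, sum_const, nsmul_eq_mul]
        field_simp
    _ ≤ 1 / (#s : ℝ) * ∑ k ∈ s, B k := by
        gcongr with k hk
        exact hB k hk x

theorem integrable_ciSup_of_fintype {Ω S : Type*} [MeasurableSpace Ω] {P : Measure Ω}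
    [Fintype S] [Nonempty S] {f : S → Ω → ℝ} (hf : ∀ x, Integrable (f x) P) :
    Integrable (fun ω => ⨆ x, f x ω) P := by
  have h : Integrable (univ.sup' univ_nonempty f) P :=
    sup'_induction (p := fun g => Integrable g P) _ _ (fun _ h₁ _ h₂ => h₁.sup h₂)
      fun x _ => hf x
  convert h with ω
  rw [Finset.sup'_apply, sup'_univ_eq_ciSup]

theorem log_partition_ge_expected_max_averaged_perturbation_general
    {n : ℕ} (X : Fin n → Type*) [∀ i, Fintype (X i)] [∀ i, Nonempty (X i)]
    (θ : (∀ i, X i) → ℝ)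
    (A : Finset (Finset (Fin n))) (hA : A.Nonempty)
    {Ω : Type*} [MeasurableSpace Ω] (P : Measure Ω) [IsProbabilityMeasure P]
    (γ : (α : Finset (Fin n)) → ((i : α) → X i) → Ω → ℝ)
    (hmeas : ∀ α v, Measurable (γ α v))
    (hindep : iIndepFun
      (fun p : (α : {a // a ∈ A}) × ((i : (α.1 : Finset (Fin n))) → X i) => γ p.1 p.2) P)
    (hcdf : ∀ α v t, P {ω | γ α v ω ≤ t} =
      ENNReal.ofReal (exp (-exp (-(t + eulerMascheroniConstant))))) :
    ∫ ω, (⨆ x : ∀ i, X i,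
        (θ x + (1 / (A.card : ℝ)) * ∑ α ∈ A.attach, γ α.1 (fun i => x i) ω)) ∂P ≤
      Real.log (∑ x : ∀ i, X i, exp (θ x)) := by
  classical
  set logZ := log (∑ x : ∀ i, X i, exp (θ x))
  let c (α : Finset (Fin n)) := fiberLogSumExp (α.restrict : (∀ i, X i) → (i : α) → X i) θ
  let M (α : A) (ω : Ω) := univ.sup' univ_nonempty fun v => c α v + γ α v ω
  have hγ (α v) : HasLaw (γ α v) (gumbelMeasure 0) P :=
    hasLaw_gumbelMeasure_of_cdf (hmeas α v).aemeasurable fun t => by simpa using hcdf α v t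
  have hM (α : A) : HasLaw (M α) (gumbelMeasure logZ) P := by
    have h := hasLaw_sup'_add_gumbelMeasure (hindep.precomp sigma_mk_injective)
      (fun v => hγ _ v) (c α)
    rwa [sum_exp_fiberLogSumExp (Finset.restrict_surjective _)] at h
  have hbound (ω : Ω) : (⨆ x : ∀ i, X i,
      (θ x + (1 / (A.card : ℝ)) * ∑ α ∈ A.attach, γ α.1 (fun i => x i) ω)) ≤
      1 / (A.card : ℝ) * ∑ α ∈ A.attach, M α ω := by
    rw [← card_attach]
    refine ciSup_add_average_le hA.attach θ _ _ fun α _ x => ?_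
    calc θ x + γ α (fun i => x i) ω ≤ c α (α.1.restrict x) + γ α (α.1.restrict x) ω := by
          gcongr ?_ + _
          exact le_fiberLogSumExp _ θ x
      _ ≤ M α ω := le_sup' (fun v => c α v + γ α v ω) (mem_univ _)
  have hγint (α v) : Integrable (γ α v) P :=
    (hγ α v).integrable_of_integrable_id (integrable_id_gumbelMeasure 0)
  have hMint (α) : Integrable (M α) P :=
    (hM α).integrable_of_integrable_id (integrable_id_gumbelMeasure _)
  calc _ ≤ ∫ ω, 1 / (A.card : ℝ) * ∑ α ∈ A.attach, M α ω ∂P :=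
        integral_mono (integrable_ciSup_of_fintype fun x => (integrable_const _).add
            ((integrable_finsetSum _ fun α _ => hγint _ _).const_mul _))
          ((integrable_finsetSum _ fun α _ => hMint α).const_mul _) hbound
    _ = logZ := by
      rw [integral_const_mul, integral_finsetSum _ fun α _ => hMint α]
      simp_rw [(hM _).integral_eq, integral_id_gumbelMeasure]
      rw [sum_const, card_attach, nsmul_eq_mul]
      field_simp [hA.card_pos.ne']

/-- Let `X = X₁ × ⋯ × Xₙ` be a finite product space, `θ : X → ℝ`,
`Z = ∑_x exp (θ x)`, and `A` a nonempty family of nonempty subsets of the coordinates.  If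
`γ α v`, one for each `α ∈ A` and each assignment `v` to the coordinates in `α`, are
mutually independent zero-mean Gumbel random variables, then
`log Z ≥ E[max_x {θ x + (1/|A|) ∑_{α∈A} γ α (x_α)}]`. -/
theorem log_partition_ge_expected_max_averaged_perturbation
    {n : ℕ} (X : Fin n → Type*) [∀ i, Fintype (X i)] [∀ i, Nonempty (X i)]
    (θ : (∀ i, X i) → ℝ)
    (A : Finset (Finset (Fin n))) (hA : A.Nonempty) (hne : ∀ α ∈ A, α.Nonempty)
    {Ω : Type*} [MeasurableSpace Ω] (P : Measure Ω) [IsProbabilityMeasure P]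
    (γ : (α : Finset (Fin n)) → ((i : α) → X i) → Ω → ℝ)
    (hmeas : ∀ α v, Measurable (γ α v))
    (hindep : iIndepFun
      (fun p : (α : {a // a ∈ A}) × ((i : (α.1 : Finset (Fin n))) → X i) => γ p.1 p.2) P)
    (hcdf : ∀ α v t, P {ω | γ α v ω ≤ t} =
      ENNReal.ofReal (exp (-exp (-(t + eulerMascheroniConstant))))) :
    ∫ ω, (⨆ x : ∀ i, X i,
        (θ x + (1 / (A.card : ℝ)) * ∑ α ∈ A.attach, γ α.1 (fun i => x i) ω)) ∂P ≤
      Real.log (∑ x : ∀ i, X i, exp (θ x)) :=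
  log_partition_ge_expected_max_averaged_perturbation_general X θ A hA P γ hmeas hindep hcdf
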